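/- arXiv:1810.09207 — 2 statements merged into one kernel-verified Lean document; each statement's English description precedes it below -/
import Mathlib

section
/- Let X be an ℝ^d-valued random vector whose distribution is α-symmetric for some α ∈ (0,2], i.e., for every u ∈ ℝ^d the linear combination u⬝X has the same distribution as ‖u‖_α · X₁, where X₁ is the first coordinate of X. Then the halfspace depth of x with respect to the law of X equals F(inf_{u ≠ 0} (u⬝x)/‖u‖_α), where F is the cumulative distribution function of X₁, provided F is continuous. -/
open MeasureTheory

/-- The `ℓ^α` quasi-norm `(∑ᵢ |uᵢ|^α)^(1/α)` on `ℝ^d`. -/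
noncomputable def alphaNorm {d : ℕ} (α : ℝ) (u : Fin d → ℝ) : ℝ :=
    (∑ i, |u i| ^ α) ^ (1 / α)

/-- The halfspace (Tukey) depth of `x` with respect to a measure `P` on `ℝ^d`. -/
noncomputable def halfspaceDepth {d : ℕ} (x : Fin d → ℝ) (P : Measure (Fin d → ℝ)) : ℝ :=
    ⨅ u : {u : Fin d → ℝ // u ≠ 0}, (P {z | ∑ i, u.1 i * z i ≤ ∑ i, u.1 i * x i}).toReal

/-! Under α-symmetry the mass of the halfspace `{z | u ⬝ z ≤ u ⬝ x}` is `F ((u ⬝ x) / ‖u‖_α)`,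
so the depth is the infimum of `F` over these normalized values. Since `F` is monotone and
continuous it commutes with that infimum, which exists because `|u ⬝ x| ≤ ‖u‖_α ∑ᵢ |xᵢ|`. -/

section AlphaNorm

variable {d : ℕ} {α : ℝ}

lemma alphaNorm_pos {u : Fin d → ℝ} (hu : u ≠ 0) : 0 < alphaNorm α u := by
  obtain ⟨j, hj⟩ := Function.ne_iff.mp hu
  have hsum : 0 < ∑ i, |u i| ^ α :=
    Finset.sum_pos' (fun i _ => Real.rpow_nonneg (abs_nonneg _) _)
      ⟨j, Finset.mem_univ j, Real.rpow_pos_of_pos (abs_pos.2 hj) _⟩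
  exact Real.rpow_pos_of_pos hsum _

lemma abs_le_alphaNorm (hα : 0 < α) (u : Fin d → ℝ) (i : Fin d) :
    |u i| ≤ alphaNorm α u := by
  have hsingle : |u i| ^ α ≤ ∑ j, |u j| ^ α :=
    Finset.single_le_sum (f := fun j => |u j| ^ α)
      (fun j _ => Real.rpow_nonneg (abs_nonneg _) _) (Finset.mem_univ i)
  have hroot : (|u i| ^ α) ^ (1 / α) ≤ alphaNorm α u :=
    Real.rpow_le_rpow (Real.rpow_nonneg (abs_nonneg _) _) hsingle (by positivity)
  rwa [← Real.rpow_mul (abs_nonneg _), mul_one_div, div_self hα.ne', Real.rpow_one] at hroot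

lemma abs_sum_mul_le_alphaNorm_mul (hα : 0 < α) (u x : Fin d → ℝ) :
    |∑ i, u i * x i| ≤ alphaNorm α u * ∑ i, |x i| :=
  calc |∑ i, u i * x i| ≤ ∑ i, |u i| * |x i| := by
        simpa only [abs_mul] using Finset.abs_sum_le_sum_abs (fun i => u i * x i) Finset.univ
    _ ≤ ∑ i, alphaNorm α u * |x i| := by
        gcongr with i
        exact abs_le_alphaNorm hα u i
    _ = alphaNorm α u * ∑ i, |x i| := (Finset.mul_sum _ _ _).symm

lemma bddBelow_range_sum_mul_div_alphaNorm (hα : 0 < α) (x : Fin d → ℝ) :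
    BddBelow (Set.range fun u : {u : Fin d → ℝ // u ≠ 0} =>
      (∑ i, u.1 i * x i) / alphaNorm α u.1) := by
  refine ⟨-∑ i, |x i|, ?_⟩
  rintro _ ⟨⟨u, hu⟩, rfl⟩
  rw [le_div_iff₀ (alphaNorm_pos hu), neg_mul, neg_le, mul_comm]
  exact (neg_le_abs _).trans (abs_sum_mul_le_alphaNorm_mul hα u x)

end AlphaNorm

section Measure

variable {Ω : Type*} [MeasurableSpace Ω] {P : Measure Ω}

lemma measure_le_eq_of_map_eq_const_mul {f g : Ω → ℝ} (hf : Measurable f) (hg : Measurable g)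
    {N : ℝ} (hN : 0 < N) (h : P.map f = P.map (fun z => N * g z)) (c : ℝ) :
    P {z | f z ≤ c} = P {z | g z ≤ c / N} := by
  have hIic := congrArg (fun μ : Measure ℝ => μ (Set.Iic c)) h
  simp only [Measure.map_apply hf measurableSet_Iic,
    Measure.map_apply (hg.const_mul N) measurableSet_Iic] at hIic
  have hpre : (fun z => N * g z) ⁻¹' Set.Iic c = {z | g z ≤ c / N} := by
    ext z
    simp only [Set.mem_preimage, Set.mem_Iic, Set.mem_ofPred_eq, le_div_iff₀ hN, mul_comm]
  rwa [hpre] at hIic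

lemma monotone_measureReal_le [IsFiniteMeasure P] (g : Ω → ℝ) :
    Monotone fun s => (P {z | g z ≤ s}).toReal :=
  fun _ _ hst => ENNReal.toReal_mono (measure_ne_top P _)
    (measure_mono fun _ hz => le_trans hz hst)

end Measure

theorem depth_of_alphaSymmetric_general (d : ℕ) (hd : 1 ≤ d)
    (α : ℝ) (hα₀ : 0 < α)
    (P : Measure (Fin d → ℝ)) [IsProbabilityMeasure P]
    (hsym : ∀ u : Fin d → ℝ,
      Measure.map (fun z => ∑ i, u i * z i) P
        = Measure.map (fun z => alphaNorm α u * z ⟨0, hd⟩) P)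
    (F : ℝ → ℝ) (hFdef : ∀ s, F s = (P {z | z ⟨0, hd⟩ ≤ s}).toReal)
    (hF : Continuous F) (x : Fin d → ℝ) :
    halfspaceDepth x P
      = F (⨅ u : {u : Fin d → ℝ // u ≠ 0}, (∑ i, u.1 i * x i) / alphaNorm α u.1) := by
  have hhalfspace : ∀ u : {u : Fin d → ℝ // u ≠ 0},
      (P {z | ∑ i, u.1 i * z i ≤ ∑ i, u.1 i * x i}).toReal
        = F ((∑ i, u.1 i * x i) / alphaNorm α u.1) := by
    rintro ⟨u, hu⟩
    rw [hFdef, measure_le_eq_of_map_eq_const_mul (by fun_prop) (measurable_pi_apply _)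
      (alphaNorm_pos hu) (hsym u)]
  have hFmono : Monotone F := by
    simpa only [← funext hFdef] using monotone_measureReal_le (P := P) (fun z => z ⟨0, hd⟩)
  have : Nonempty {u : Fin d → ℝ // u ≠ 0} := ⟨⟨fun _ => 1, Function.ne_iff.mpr ⟨⟨0, hd⟩, one_ne_zero⟩⟩⟩
  simp only [halfspaceDepth, hhalfspace]
  exact (hFmono.map_ciInf_of_continuousAt hF.continuousAt
    (bddBelow_range_sum_mul_div_alphaNorm hα₀ x)).symm

theorem depth_of_alphaSymmetric (d : ℕ) (hd : 1 ≤ d)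
    (α : ℝ) (hα₀ : 0 < α) (hα₂ : α ≤ 2)
    (P : Measure (Fin d → ℝ)) [IsProbabilityMeasure P]
    (hsym : ∀ u : Fin d → ℝ,
      Measure.map (fun z => ∑ i, u i * z i) P
        = Measure.map (fun z => alphaNorm α u * z ⟨0, hd⟩) P)
    (F : ℝ → ℝ) (hFdef : ∀ s, F s = (P {z | z ⟨0, hd⟩ ≤ s}).toReal)
    (hF : Continuous F) (x : Fin d → ℝ) :
    halfspaceDepth x P
      = F (⨅ u : {u : Fin d → ℝ // u ≠ 0}, (∑ i, u.1 i * x i) / alphaNorm α u.1) :=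
  depth_of_alphaSymmetric_general d hd α hα₀ P hsym F hFdef hF x
end

section
/- Let P and Q be distributions on ℝ^d (d ≥ 2) of random vectors X and Y respectively such that: (i) X is 1-symmetric (u⬝X =_d ‖u‖₁ X₁ for all u), (ii) Y is 1/2-symmetric (u⬝Y =_d ‖u‖_{1/2} Y₁ for all u), (iii) X₁ and Y₁ have the same continuous CDF F. Then the halfspace depths of P and Q coincide: D(x;P) = D(x;Q) = F(-‖x‖_∞) for all x ∈ ℝ^d. -/
/-!
If `u ⬝ X` has the law of `‖u‖_α X₁`, the halfspace `{z | u ⬝ z ≤ u ⬝ x}` has mass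
`F (u ⬝ x / ‖u‖_α)`. For `α ≤ 1` we have `‖u‖₁ ≤ ‖u‖_α`, so Hölder's inequality
`u ⬝ x ≥ -‖u‖₁ ‖x‖_∞` bounds the argument of `F` below by `-‖x‖_∞`, and a signed coordinate vector
`± e_j` at a coordinate where `|x_j|` is maximal attains this bound. As `F` is monotone, the
infimum defining the depth is `F (-‖x‖_∞)`, independently of `α ∈ (0, 1]`.
-/

open MeasureTheory

namespace Real

lemma rpow_sum_le_sum_rpow {ι : Type*} (s : Finset ι) {f : ι → ℝ} (hf : ∀ i ∈ s, 0 ≤ f i)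
    {p : ℝ} (hp0 : 0 < p) (hp1 : p ≤ 1) : (∑ i ∈ s, f i) ^ p ≤ ∑ i ∈ s, f i ^ p :=
  Finset.le_sum_of_subadditive_on_pred (fun x : ℝ => x ^ p) (0 ≤ ·)
    (by simp [Real.zero_rpow hp0.ne']) (fun _ _ hx hy => Real.rpow_add_le_add_rpow hx hy hp0.le hp1)
    (fun _ _ hx hy => add_nonneg hx hy) f hf

end Real

section AlphaNorm

variable {d : ℕ} {α : ℝ}

lemma alphaNorm_single (hα : 0 < α) (j : Fin d) (c : ℝ) :
    alphaNorm α (Pi.single j c) = |c| := by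
  unfold alphaNorm
  rw [Finset.sum_eq_single j
    (fun i _ hij => by simp [Pi.single_eq_of_ne hij, Real.zero_rpow hα.ne']) (by simp)]
  simp [← Real.rpow_mul (abs_nonneg c), mul_inv_cancel₀ hα.ne']

lemma sum_abs_le_alphaNorm (hα0 : 0 < α) (hα1 : α ≤ 1) (u : Fin d → ℝ) :
    ∑ i, |u i| ≤ alphaNorm α u :=
  calc ∑ i, |u i| = ((∑ i, |u i|) ^ α) ^ (1 / α) := by
        rw [← Real.rpow_mul (by positivity), mul_one_div_cancel hα0.ne', Real.rpow_one]
    _ ≤ alphaNorm α u := Real.rpow_le_rpow (by positivity)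
        (Real.rpow_sum_le_sum_rpow _ (fun i _ => abs_nonneg _) hα0 hα1) (by positivity)

end AlphaNorm

section HalfspaceDepth

variable {d : ℕ}

lemma abs_sum_mul_le_sum_abs_mul_iSup_abs (u x : Fin d → ℝ) :
    |∑ i, u i * x i| ≤ (∑ i, |u i|) * ⨆ i, |x i| :=
  calc |∑ i, u i * x i| ≤ ∑ i, |u i| * |x i| := by
        simpa only [abs_mul] using Finset.abs_sum_le_sum_abs (fun i => u i * x i) Finset.univ
    _ ≤ ∑ i, |u i| * ⨆ j, |x j| := Finset.sum_le_sum fun i _ =>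
        mul_le_mul_of_nonneg_left (le_ciSup (f := fun j => |x j|) (Finite.bddAbove_range _) i)
          (abs_nonneg _)
    _ = (∑ i, |u i|) * ⨆ i, |x i| := (Finset.sum_mul _ _ _).symm

lemma measure_sum_mul_le_eq_of_map_eq {μ : Measure (Fin d → ℝ)} {u : Fin d → ℝ} {c : ℝ}
    (hc : 0 < c) {i₀ : Fin d}
    (h : μ.map (fun z => ∑ i, u i * z i) = μ.map (fun z => c * z i₀)) (t : ℝ) :
    μ {z | ∑ i, u i * z i ≤ t} = μ {z | z i₀ ≤ t / c} := by
  have hdot : Measurable fun z : Fin d → ℝ => ∑ i, u i * z i := by fun_prop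
  have hproj : Measurable fun z : Fin d → ℝ => c * z i₀ := by fun_prop
  calc μ {z | ∑ i, u i * z i ≤ t} = μ.map (fun z => ∑ i, u i * z i) (Set.Iic t) :=
        (Measure.map_apply hdot measurableSet_Iic).symm
    _ = μ.map (fun z => c * z i₀) (Set.Iic t) := by rw [h]
    _ = μ {z | z i₀ ≤ t / c} := by
        rw [Measure.map_apply hproj measurableSet_Iic]
        simp only [Set.preimage, Set.mem_Iic, le_div_iff₀' hc]

lemma neg_iSup_abs_le_sum_mul_div_alphaNorm {α : ℝ} (hα0 : 0 < α) (hα1 : α ≤ 1)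
    {u : Fin d → ℝ} (hu : u ≠ 0) (x : Fin d → ℝ) :
    -(⨆ i, |x i|) ≤ (∑ i, u i * x i) / alphaNorm α u := by
  rw [le_div_iff₀ (alphaNorm_pos hu)]
  have hM : 0 ≤ ⨆ i, |x i| := Real.iSup_nonneg fun i => abs_nonneg (x i)
  nlinarith [abs_sum_mul_le_sum_abs_mul_iSup_abs u x, sum_abs_le_alphaNorm hα0 hα1 u,
    neg_abs_le (∑ i, u i * x i)]

lemma exists_alphaNorm_eq_one_sum_mul_eq_neg_iSup_abs [Nonempty (Fin d)] {α : ℝ} (hα : 0 < α)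
    (x : Fin d → ℝ) :
    ∃ e : Fin d → ℝ, e ≠ 0 ∧ alphaNorm α e = 1 ∧ ∑ i, e i * x i = -(⨆ i, |x i|) := by
  obtain ⟨j, hj⟩ := exists_eq_ciSup_of_finite (f := fun i => |x i|)
  obtain ⟨c, hc, hcx⟩ : ∃ c : ℝ, |c| = 1 ∧ c * x j = -|x j| := by
    rcases le_or_gt 0 (x j) with h | h
    · exact ⟨-1, by simp, by simp [abs_of_nonneg h]⟩
    · exact ⟨1, by simp, by simp [abs_of_neg h]⟩
  refine ⟨Pi.single j c, ?_, by rw [alphaNorm_single hα, hc], ?_⟩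
  · simpa [Pi.single_eq_zero_iff] using abs_ne_zero.mp (hc.trans_ne one_ne_zero)
  · rw [← hj, ← hcx]
    exact single_dotProduct x c j

def IsAlphaSymmetric (α : ℝ) (μ : Measure (Fin d → ℝ)) (i₀ : Fin d) : Prop :=
  ∀ u : Fin d → ℝ,
    μ.map (fun z => ∑ i, u i * z i) = μ.map (fun z => alphaNorm α u * z i₀)

theorem halfspaceDepth_eq_of_isAlphaSymmetric {α : ℝ} (hα0 : 0 < α) (hα1 : α ≤ 1)
    (μ : Measure (Fin d → ℝ)) [IsProbabilityMeasure μ] (i₀ : Fin d)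
    (hsym : IsAlphaSymmetric α μ i₀) (F : ℝ → ℝ) (hF : ∀ s, F s = (μ {z | z i₀ ≤ s}).toReal)
    (x : Fin d → ℝ) :
    halfspaceDepth x μ = F (-(⨆ i, |x i|)) := by
  have hFmono : Monotone F := fun s t hst => by
    simp only [hF]
    exact ENNReal.toReal_mono (measure_ne_top μ _) (measure_mono fun z hz => le_trans hz hst)
  have hdepth : ∀ u : {u : Fin d → ℝ // u ≠ 0},
      (μ {z | ∑ i, u.1 i * z i ≤ ∑ i, u.1 i * x i}).toReal
        = F ((∑ i, u.1 i * x i) / alphaNorm α u.1) := fun u => by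
    rw [hF, measure_sum_mul_le_eq_of_map_eq (alphaNorm_pos u.2) (hsym u.1)]
  have : Nonempty (Fin d) := ⟨i₀⟩
  obtain ⟨e, he, hnorm, hdot⟩ := exists_alphaNorm_eq_one_sum_mul_eq_neg_iSup_abs hα0 x
  have : Nonempty {u : Fin d → ℝ // u ≠ 0} := ⟨⟨e, he⟩⟩
  unfold halfspaceDepth
  simp only [hdepth]
  refine IsGLB.ciInf_eq (IsLeast.isGLB ⟨⟨⟨e, he⟩, by simp only [hnorm, hdot, div_one]⟩, ?_⟩)
  rintro _ ⟨⟨u, hu⟩, rfl⟩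
  exact hFmono (neg_iSup_abs_le_sum_mul_div_alphaNorm hα0 hα1 hu x)

end HalfspaceDepth

theorem depths_coincide (d : ℕ) (hd : 2 ≤ d)
    (P Q : Measure (Fin d → ℝ)) [IsProbabilityMeasure P] [IsProbabilityMeasure Q]
    (hsymP : ∀ u : Fin d → ℝ,
      Measure.map (fun z => ∑ i, u i * z i) P
        = Measure.map (fun z => alphaNorm 1 u * z ⟨0, by omega⟩) P)
    (hsymQ : ∀ u : Fin d → ℝ,
      Measure.map (fun z => ∑ i, u i * z i) Q
        = Measure.map (fun z => alphaNorm (1/2) u * z ⟨0, by omega⟩) Q)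
    (F : ℝ → ℝ)
    (hFP : ∀ s, F s = (P {z | z ⟨0, by omega⟩ ≤ s}).toReal)
    (hFQ : ∀ s, F s = (Q {z | z ⟨0, by omega⟩ ≤ s}).toReal) :
    ∀ x : Fin d → ℝ,
      halfspaceDepth x P = F (-(⨆ i, |x i|)) ∧
      halfspaceDepth x Q = F (-(⨆ i, |x i|)) := fun x =>
  ⟨halfspaceDepth_eq_of_isAlphaSymmetric one_pos le_rfl P _ hsymP F hFP x,
    halfspaceDepth_eq_of_isAlphaSymmetric (by norm_num) (by norm_num) Q _ hsymQ F hFQ x⟩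
end
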